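/- arXiv:1808.05609 — 2 statements merged into one kernel-verified Lean document; each statement's English description precedes it below -/
import Mathlib

section
/- Let δ ≥ 0. If S ⊆ ℤ is a set of δ-recurrence, then for every δ' > δ there is a finite subset S' ⊆ S such that S' is a set of δ'-recurrence. -/
/-- A measure preserving system: a probability space `(X, μ)` together with an
invertible measure preserving transformation `T : X → X`. -/
structure MPSystem where
  X : Type
  [mX : MeasurableSpace X]
  μ : MeasureTheory.Measure X
  prob : MeasureTheory.IsProbabilityMeasure μ
  T : X ≃ᵐ X
  mp : MeasureTheory.MeasurePreserving T μ μ

attribute [instance] MPSystem.mX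

open MeasureTheory Filter

namespace MPSystem

/-- The `n`-th iterate `Tⁿ` of the transformation, for `n : ℤ`. -/
def iter (𝒮 : MPSystem) (n : ℤ) : 𝒮.X → 𝒮.X :=
  fun x => ((𝒮.T.toEquiv : Equiv.Perm 𝒮.X) ^ n) x

/-- The system is ergodic: every measurable `D` with `μ(D △ T⁻¹D) = 0` has measure `0` or `1`. -/
def IsErgodic (𝒮 : MPSystem) : Prop :=
  ∀ D : Set 𝒮.X, MeasurableSet D → 𝒮.μ (symmDiff D (𝒮.T ⁻¹' D)) = 0 →
    𝒮.μ D = 0 ∨ 𝒮.μ D = 1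

/-- The product system `(X × X, μ × μ, T × T)`. -/
noncomputable def prod (𝒮 : MPSystem) : MPSystem where
  X := 𝒮.X × 𝒮.X
  μ := 𝒮.μ.prod 𝒮.μ
  prob := by have := 𝒮.prob; infer_instance
  T := 𝒮.T.prodCongr 𝒮.T
  mp := by have := 𝒮.prob; exact 𝒮.mp.prod 𝒮.mp

/-- The system is weak mixing: the product system `(X×X, μ×μ, T×T)` is ergodic. -/
def WeakMixing (𝒮 : MPSystem) : Prop := 𝒮.prod.IsErgodic

/-- The system is nontrivial: some measurable `D` has `μ(D △ T⁻¹D) > 0`. -/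
def Nontrivial (𝒮 : MPSystem) : Prop :=
  ∃ D : Set 𝒮.X, MeasurableSet D ∧ 0 < 𝒮.μ (symmDiff D (𝒮.T ⁻¹' D))

end MPSystem

/-- `S ⊆ ℤ` is a set of recurrence: for every measure preserving system and every
measurable `D` with `μ(D) > 0`, there is `n ∈ S` with `μ(D ∩ TⁿD) > 0`. -/
def IsRecurrenceSet (S : Set ℤ) : Prop :=
  ∀ (𝒮 : MPSystem) (D : Set 𝒮.X), MeasurableSet D → 0 < 𝒮.μ D →
    ∃ n ∈ S, 0 < 𝒮.μ (D ∩ 𝒮.iter n '' D)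

/-- `S ⊆ ℤ` is measure expanding: every translate `S + m` is a set of recurrence. -/
def MeasureExpanding (S : Set ℤ) : Prop :=
  ∀ m : ℤ, IsRecurrenceSet ((fun s => s + m) '' S)

/-- `S` is a set of `δ`-recurrence: for every measure preserving system and every
measurable `D` with `μ(D) > δ`, there is `n ∈ S` with `μ(D ∩ TⁿD) > 0`. -/
def IsDeltaRecurrenceSet (δ : ℝ) (S : Set ℤ) : Prop :=
  ∀ (𝒮 : MPSystem) (D : Set 𝒮.X), MeasurableSet D → ENNReal.ofReal δ < 𝒮.μ D →
    ∃ n ∈ S, 0 < 𝒮.μ (D ∩ 𝒮.iter n '' D)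

/-- `S` (an infinite set) is a set of rigidity for the system `𝒮`:
for every measurable `D` and every `ε > 0`, `{n ∈ S : μ(D △ TⁿD) > ε}` is finite. -/
def IsRigiditySetFor (S : Set ℤ) (𝒮 : MPSystem) : Prop :=
  S.Infinite ∧ ∀ D : Set 𝒮.X, MeasurableSet D → ∀ ε : ℝ, 0 < ε →
    {n ∈ S | ENNReal.ofReal ε < 𝒮.μ (symmDiff D (𝒮.iter n '' D))}.Finite

/-- `S` is a set of strong recurrence. -/
def IsStrongRecurrenceSet (S : Set ℤ) : Prop :=
  ∀ (𝒮 : MPSystem) (D : Set 𝒮.X), MeasurableSet D → 0 < 𝒮.μ D →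
    ∃ c : ℝ, 0 < c ∧ {n ∈ S | ENNReal.ofReal c < 𝒮.μ (D ∩ 𝒮.iter n '' D)}.Infinite

/-- `S` is a set of strong recurrence for weak mixing systems. -/
def IsStrongRecurrenceSetForWeakMixing (S : Set ℤ) : Prop :=
  ∀ (𝒮 : MPSystem), 𝒮.WeakMixing → ∀ (D : Set 𝒮.X), MeasurableSet D → 0 < 𝒮.μ D →
    ∃ c : ℝ, 0 < c ∧ {n ∈ S | ENNReal.ofReal c < 𝒮.μ (D ∩ 𝒮.iter n '' D)}.Infinite

/-- The circle group `𝕋 = ℝ/ℤ`. -/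
abbrev 𝕋 : Type := UnitAddCircle

/-- The character `e : 𝕋 → S¹ ⊆ ℂ`, `e(x) = exp(2πi x̃)` where `x̃` is a real
representative of `x`. -/
noncomputable def e (x : 𝕋) : ℂ := (AddCircle.toCircle x : ℂ)

/-- A tuple `α ∈ 𝕋^d` is independent if the only integer solution of
`n₁α₁ + ⋯ + n_dα_d = 0` is `n₁ = ⋯ = n_d = 0`. -/
def IndepTuple {d : ℕ} (α : Fin d → 𝕋) : Prop :=
  ∀ n : Fin d → ℤ, (∑ j, n j • α j) = 0 → ∀ j, n j = 0

/-- The Bohr set `Bohr(α, η) = {n ∈ ℤ : max_j ‖nαⱼ‖ < η}`. -/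
def BohrSet {d : ℕ} (α : Fin d → 𝕋) (η : ℝ) : Set ℤ :=
  {n : ℤ | ∀ j, ‖n • α j‖ < η}

/-- The Bohr–Hamming neighborhood `BH(α; ε, η) = {n ∈ ℤ : #{j : ‖nαⱼ‖ < ε} ≥ (1-η)d}`. -/
def BHNbhd {d : ℕ} (α : Fin d → 𝕋) (ε η : ℝ) : Set ℤ :=
  {n : ℤ | (1 - η) * d ≤ ({j : Fin d | ‖n • α j‖ < ε}.ncard : ℝ)}

/-- The upper Banach density of `A ⊆ ℤ`:
`d*(A) = lim_k sup_n |A ∩ {n+1,…,n+k}|/k` (realized as a `limsup`). -/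
noncomputable def upperBanachDensity (A : Set ℤ) : ℝ :=
  Filter.limsup
    (fun k : ℕ => ⨆ n : ℤ, ((A ∩ Set.Icc (n + 1) (n + k)).ncard : ℝ) / k) Filter.atTop

/-! Each counterexample for a finite window `S ∩ [-k, k]` is coded by the itineraries of points
through `D`: this gives a shift-invariant probability measure on `ℤ → Bool` in which the clopen
cylinder `{ω | ω 0 = true}` has measure `> δ'` and no returns in the window. Probability measures
on the compact space `ℤ → Bool` form a compact space, and measures of clopen sets pass to weak
limits, so a limit point is a shift-invariant measure in which the cylinder has measure
`≥ δ' > δ` and no returns in `S` at all, contradicting `δ`-recurrence of `S`. -/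

open MeasureTheory Filter Set Topology
open scoped ENNReal

theorem MeasureTheory.ProbabilityMeasure.exists_tendsto_measurePreserving {E : Type*} [TopologicalSpace E]
    [CompactSpace E] [T2Space E] [HasOuterApproxClosed E] [MeasurableSpace E] [BorelSpace E]
    {f : E → E} (hf : Continuous f) (νs : ℕ → ProbabilityMeasure E)
    (hνs : ∀ k, MeasurePreserving f (νs k) (νs k)) :
    ∃ (U : Ultrafilter ℕ) (ν : ProbabilityMeasure E), (U : Filter ℕ) ≤ atTop ∧
      Tendsto νs U (𝓝 ν) ∧ MeasurePreserving f ν ν := by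
  set U : Ultrafilter ℕ := .of atTop
  set ν : ProbabilityMeasure E := (U.map νs).lim
  have hlim : Tendsto νs (U : Filter ℕ) (𝓝 ν) := by
    rw [Tendsto, ← Ultrafilter.coe_map]
    exact (U.map νs).le_nhds_lim
  have hmap : Tendsto νs (U : Filter ℕ) (𝓝 (ν.map hf.measurable.aemeasurable)) := by
    have hfix : ∀ k, (νs k).map hf.measurable.aemeasurable = νs k :=
      fun k => Subtype.ext (hνs k).map_eq
    simpa only [hfix] using
      ProbabilityMeasure.tendsto_map_of_tendsto_of_continuous νs ν hlim hf
  refine ⟨U, ν, Ultrafilter.of_le _, hlim, hf.measurable, ?_⟩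
  exact congrArg ProbabilityMeasure.toMeasure (tendsto_nhds_unique hmap hlim)

section Shift

variable {α : Type*} [TopologicalSpace α]

def shift : (ℤ → α) ≃ₜ (ℤ → α) where
  toFun ω i := ω (i + 1)
  invFun ω i := ω (i - 1)
  left_inv ω := by simp
  right_inv ω := by simp

theorem shift_zpow_apply (n : ℤ) (ω : ℤ → α) (i : ℤ) :
    ((shift.toEquiv : Equiv.Perm (ℤ → α)) ^ n) ω i = ω (i + n) := by
  induction n using Int.induction_on generalizing ω with
  | zero => simp
  | succ n ih =>
    rw [zpow_add_one, Equiv.Perm.mul_apply, ih, ← add_assoc]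
    rfl
  | pred n ih =>
    rw [zpow_sub_one, Equiv.Perm.mul_apply, ih, add_sub_assoc']
    rfl

end Shift

theorem isClopen_setOf_apply_eq_true (j : ℤ) : IsClopen {ω : ℤ → Bool | ω j = true} :=
  (isClopen_discrete {true}).preimage (continuous_apply j)

theorem measurableSet_setOf_apply_eq_true (j : ℤ) :
    MeasurableSet {ω : ℤ → Bool | ω j = true} :=
  (isClopen_setOf_apply_eq_true j).isOpen.measurableSet

namespace MPSystem

variable (𝒮 : MPSystem)

theorem iter_apply_T (n : ℤ) (x : 𝒮.X) : 𝒮.iter n (𝒮.T x) = 𝒮.iter (n + 1) x := by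
  simp only [iter, zpow_add_one, Equiv.Perm.mul_apply]
  rfl

theorem measurable_iter (n : ℤ) : Measurable (𝒮.iter n) := by
  induction n using Int.induction_on with
  | zero => exact measurable_id
  | succ n ih =>
    have : 𝒮.iter (n + 1) = 𝒮.iter n ∘ 𝒮.T := funext fun x => (𝒮.iter_apply_T n x).symm
    exact this ▸ ih.comp 𝒮.T.measurable
  | pred n ih =>
    have : 𝒮.iter (-n - 1) = 𝒮.iter (-n) ∘ 𝒮.T.symm := by
      funext x
      simp only [iter, zpow_sub_one, Equiv.Perm.mul_apply, Function.comp_apply]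
      rfl
    exact this ▸ ih.comp 𝒮.T.symm.measurable

theorem image_iter (n : ℤ) (D : Set 𝒮.X) : 𝒮.iter n '' D = 𝒮.iter (-n) ⁻¹' D := by
  change ⇑((𝒮.T.toEquiv : Equiv.Perm 𝒮.X) ^ n) '' D =
    ⇑((𝒮.T.toEquiv : Equiv.Perm 𝒮.X) ^ (-n)) ⁻¹' D
  rw [zpow_neg, Equiv.Perm.inv_def]
  exact Equiv.image_eq_preimage_symm _ D

def NoReturnsIn (D : Set 𝒮.X) (S : Set ℤ) : Prop :=
  ∀ n ∈ S, 𝒮.μ (D ∩ 𝒮.iter n '' D) = 0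

open scoped Classical in
noncomputable def itinerary (D : Set 𝒮.X) (x : 𝒮.X) : ℤ → Bool := fun i => 𝒮.iter i x ∈ D

theorem itinerary_preimage_setOf (D : Set 𝒮.X) (j : ℤ) :
    𝒮.itinerary D ⁻¹' {ω | ω j = true} = 𝒮.iter j ⁻¹' D := by
  ext x
  simp [itinerary]

theorem itinerary_T (D : Set 𝒮.X) (x : 𝒮.X) :
    𝒮.itinerary D (𝒮.T x) = shift (𝒮.itinerary D x) := by
  classical
  funext i
  change decide (𝒮.iter i (𝒮.T x) ∈ D) = decide (𝒮.iter (i + 1) x ∈ D)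
  rw [iter_apply_T]

variable {D : Set 𝒮.X}

theorem measurable_itinerary (hD : MeasurableSet D) : Measurable (𝒮.itinerary D) :=
  measurable_pi_lambda _ fun j => measurable_to_bool <| by
    simpa [itinerary, preimage] using hD.preimage (𝒮.measurable_iter j)

noncomputable def itineraryMeasure (hD : MeasurableSet D) : ProbabilityMeasure (ℤ → Bool) :=
  haveI := 𝒮.prob
  ⟨𝒮.μ.map (𝒮.itinerary D),
    Measure.isProbabilityMeasure_map (𝒮.measurable_itinerary hD).aemeasurable⟩

theorem itineraryMeasure_apply (hD : MeasurableSet D) {A : Set (ℤ → Bool)}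
    (hA : MeasurableSet A) : (𝒮.itineraryMeasure hD : Measure (ℤ → Bool)) A =
      𝒮.μ (𝒮.itinerary D ⁻¹' A) :=
  Measure.map_apply (𝒮.measurable_itinerary hD) hA

theorem measurePreserving_shift_itineraryMeasure (hD : MeasurableSet D) :
    MeasurePreserving shift (𝒮.itineraryMeasure hD : Measure (ℤ → Bool))
      (𝒮.itineraryMeasure hD) := by
  refine ⟨shift.continuous.measurable, ?_⟩
  have hφ := 𝒮.measurable_itinerary hD
  change (𝒮.μ.map (𝒮.itinerary D)).map shift = 𝒮.μ.map (𝒮.itinerary D)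
  rw [Measure.map_map shift.continuous.measurable hφ]
  have : shift ∘ 𝒮.itinerary D = 𝒮.itinerary D ∘ 𝒮.T :=
    funext fun x => (𝒮.itinerary_T D x).symm
  rw [this, ← Measure.map_map hφ 𝒮.T.measurable, 𝒮.mp.map_eq]

theorem itineraryMeasure_setOf_zero (hD : MeasurableSet D) :
    (𝒮.itineraryMeasure hD : Measure (ℤ → Bool)) {ω | ω 0 = true} = 𝒮.μ D := by
  rw [itineraryMeasure_apply _ _ (measurableSet_setOf_apply_eq_true 0),
    itinerary_preimage_setOf]
  rfl

theorem itineraryMeasure_setOf_inter (hD : MeasurableSet D) (n : ℤ) :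
    (𝒮.itineraryMeasure hD : Measure (ℤ → Bool)) ({ω | ω 0 = true} ∩ {ω | ω (-n) = true}) =
      𝒮.μ (D ∩ 𝒮.iter n '' D) := by
  rw [itineraryMeasure_apply _ _ ((measurableSet_setOf_apply_eq_true 0).inter
    (measurableSet_setOf_apply_eq_true _)), preimage_inter, itinerary_preimage_setOf,
    itinerary_preimage_setOf, image_iter]
  rfl

end MPSystem

noncomputable def symbolicSystem (ν : ProbabilityMeasure (ℤ → Bool))
    (hν : MeasurePreserving shift (ν : Measure (ℤ → Bool)) ν) : MPSystem where
  X := ℤ → Bool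
  μ := ν
  prob := inferInstance
  T := shift.toMeasurableEquiv
  mp := hν

theorem symbolicSystem_image_iter (ν : ProbabilityMeasure (ℤ → Bool))
    (hν : MeasurePreserving shift (ν : Measure (ℤ → Bool)) ν) (n : ℤ) :
    (symbolicSystem ν hν).iter n '' {ω | ω 0 = true} = {ω | ω (-n) = true} := by
  rw [MPSystem.image_iter]
  ext (ω : ℤ → Bool)
  change ((shift.toEquiv : Equiv.Perm (ℤ → Bool)) ^ (-n)) ω 0 = true ↔ _
  rw [shift_zpow_apply, zero_add]
  rfl

theorem not_isDeltaRecurrenceSet_iff {δ : ℝ} {S : Set ℤ} :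
    ¬IsDeltaRecurrenceSet δ S ↔ ∃ (𝒮 : MPSystem) (D : Set 𝒮.X), MeasurableSet D ∧
      ENNReal.ofReal δ < 𝒮.μ D ∧ 𝒮.NoReturnsIn D S := by
  simp [IsDeltaRecurrenceSet, MPSystem.NoReturnsIn, pos_iff_ne_zero]

theorem MPSystem.exists_noReturnsIn_of_forall_Icc {S : Set ℤ} {c : ℝ≥0∞}
    (h : ∀ k : ℕ, ∃ (𝒮 : MPSystem) (D : Set 𝒮.X), MeasurableSet D ∧ c ≤ 𝒮.μ D ∧
      𝒮.NoReturnsIn D (S ∩ Icc (-(k : ℤ)) k)) :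
    ∃ (𝒮 : MPSystem) (D : Set 𝒮.X), MeasurableSet D ∧ c ≤ 𝒮.μ D ∧ 𝒮.NoReturnsIn D S := by
  choose 𝒮 D hD hc hno using h
  obtain ⟨U, ν, hU, hlim, hν⟩ := ProbabilityMeasure.exists_tendsto_measurePreserving
    shift.continuous (fun k => (𝒮 k).itineraryMeasure (hD k))
    fun k => (𝒮 k).measurePreserving_shift_itineraryMeasure (hD k)
  have hclopen {A : Set (ℤ → Bool)} (hA : IsClopen A) :
      Tendsto (fun k => ((𝒮 k).itineraryMeasure (hD k) : Measure (ℤ → Bool)) A) U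
        (𝓝 ((ν : Measure (ℤ → Bool)) A)) :=
    ProbabilityMeasure.tendsto_measure_of_null_frontier_of_tendsto' hlim
      (by simp [hA.frontier_eq])
  refine ⟨symbolicSystem ν hν, {ω | ω 0 = true}, measurableSet_setOf_apply_eq_true 0, ?_, ?_⟩
  · refine ge_of_tendsto (hclopen (isClopen_setOf_apply_eq_true 0)) (.of_forall fun k => ?_)
    exact (hc k).trans_eq ((𝒮 k).itineraryMeasure_setOf_zero (hD k)).symm
  · intro n hn
    rw [symbolicSystem_image_iter]
    refine tendsto_nhds_unique (hclopen ((isClopen_setOf_apply_eq_true 0).inter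
      (isClopen_setOf_apply_eq_true (-n)))) (tendsto_const_nhds.congr' ?_)
    filter_upwards [hU (eventually_ge_atTop n.natAbs)] with k hk
    exact (((𝒮 k).itineraryMeasure_setOf_inter (hD k) n).trans
      (hno k n ⟨hn, by omega, by omega⟩)).symm

/-- **Lemma.** If `δ ≥ 0` and `S ⊆ ℤ` is a set of `δ`-recurrence, then for every `δ' > δ`
there is a finite subset `S' ⊆ S` which is a set of `δ'`-recurrence. -/
theorem deltaRecurrence_exists_finite_subset (δ : ℝ) (hδ : 0 ≤ δ) (S : Set ℤ)
    (hS : IsDeltaRecurrenceSet δ S) (δ' : ℝ) (hδ' : δ < δ') :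
    ∃ S' : Set ℤ, S' ⊆ S ∧ S'.Finite ∧ IsDeltaRecurrenceSet δ' S' := by
  by_contra! hfin
  have hwindow (k : ℕ) : ∃ (𝒮 : MPSystem) (D : Set 𝒮.X), MeasurableSet D ∧
      ENNReal.ofReal δ' ≤ 𝒮.μ D ∧ 𝒮.NoReturnsIn D (S ∩ Icc (-(k : ℤ)) k) := by
    obtain ⟨𝒮, D, hD, hδ'D, hno⟩ := not_isDeltaRecurrenceSet_iff.1 <|
      hfin _ inter_subset_left ((finite_Icc _ _).inter_of_right _)
    exact ⟨𝒮, D, hD, hδ'D.le, hno⟩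
  obtain ⟨𝒮, D, hD, hδ'D, hno⟩ := MPSystem.exists_noReturnsIn_of_forall_Icc hwindow
  have hδδ' : ENNReal.ofReal δ < ENNReal.ofReal δ' :=
    (ENNReal.ofReal_lt_ofReal_iff (hδ.trans_lt hδ')).2 hδ'
  exact not_isDeltaRecurrenceSet_iff.2 ⟨𝒮, D, hD, hδδ'.trans_le hδ'D, hno⟩ hS
end

section
/- Let δ > 0 and S ⊆ ℤ. If S ∩ (A − A) ≠ ∅ for every A ⊆ ℤ with d*(A) > δ, then S is a set of δ-recurrence. Here A − A := {a − b : a, b ∈ A} and d*(A) is the upper Banach density of A. -/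
open MeasureTheory Filter

/-! Suppose `μ D > δ` but `μ (D ∩ TˢD) = 0` for every `s ∈ S`. By reverse Fatou applied to the
visit frequencies `k⁻¹ #{1 ≤ n ≤ k : Tⁿx ∈ D}`, whose integrals all equal `μ D`, a set of points
`x` of positive measure has a visit set `A = {n : Tⁿx ∈ D}` of upper Banach density `> δ`.
Almost every such `x` avoids all the null sets `T⁻ᵃ(D ∩ TˢD)`, yet `s = a - b` with `a, b ∈ A`
puts `Tᵃx = Tˢ(Tᵇx)` in `D ∩ TˢD`. -/

open scoped ENNReal

namespace MPSystem

variable (𝒮 : MPSystem)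

lemma iter_add (m n : ℤ) (x : 𝒮.X) : 𝒮.iter (m + n) x = 𝒮.iter m (𝒮.iter n x) := by
  simp only [iter, zpow_add, Equiv.Perm.mul_apply]

lemma measurePreserving_iter (n : ℤ) : MeasurePreserving (𝒮.iter n) 𝒮.μ 𝒮.μ := by
  change MeasurePreserving (⇑((𝒮.T.toEquiv : Equiv.Perm 𝒮.X) ^ n)) 𝒮.μ 𝒮.μ
  cases n with
  | ofNat k =>
    rw [Int.ofNat_eq_natCast, zpow_natCast, Equiv.Perm.coe_pow]
    exact 𝒮.mp.iterate k
  | negSucc k =>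
    rw [zpow_negSucc, ← inv_pow, Equiv.Perm.coe_pow]
    exact (𝒮.mp.symm 𝒮.T).iterate (k + 1)

lemma ae_forall_iter_notMem {E : Set 𝒮.X} (hE : 𝒮.μ E = 0) :
    ∀ᵐ x ∂𝒮.μ, ∀ n, 𝒮.iter n x ∉ E :=
  ae_all_iff.2 fun n =>
    measure_eq_zero_iff_ae_notMem.1 ((𝒮.measurePreserving_iter n).preimage_null hE)

noncomputable def visitCount (D : Set 𝒮.X) (k : ℕ) (x : 𝒮.X) : ℝ≥0∞ :=
  ∑ n ∈ Finset.Icc (1 : ℤ) k, D.indicator 1 (𝒮.iter n x)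

variable {𝒮} {D : Set 𝒮.X}

lemma measurable_indicator_iter (hD : MeasurableSet D) (n : ℤ) :
    Measurable fun x => D.indicator (1 : 𝒮.X → ℝ≥0∞) (𝒮.iter n x) :=
  (measurable_one.indicator hD).comp (𝒮.measurePreserving_iter n).measurable

lemma measurable_visitCount (hD : MeasurableSet D) (k : ℕ) : Measurable (𝒮.visitCount D k) :=
  Finset.measurable_sum _ fun n _ => measurable_indicator_iter hD n

lemma lintegral_visitCount (hD : MeasurableSet D) (k : ℕ) :
    ∫⁻ x, 𝒮.visitCount D k x ∂𝒮.μ = k * 𝒮.μ D := by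
  have hvisit : ∀ n : ℤ, ∫⁻ x, D.indicator 1 (𝒮.iter n x) ∂𝒮.μ = 𝒮.μ D := fun n => by
    rw [(𝒮.measurePreserving_iter n).lintegral_comp (measurable_one.indicator hD),
      lintegral_indicator_one hD]
  simp only [visitCount]
  rw [lintegral_finsetSum _ fun n _ => measurable_indicator_iter hD n]
  simp [hvisit]

lemma visitCount_le (k : ℕ) (x : 𝒮.X) : 𝒮.visitCount D k x ≤ k :=
  calc 𝒮.visitCount D k x ≤ ∑ _n ∈ Finset.Icc (1 : ℤ) k, 1 :=
        Finset.sum_le_sum fun n _ => Set.indicator_le_self' (fun _ _ => zero_le_one) _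
    _ = k := by simp

lemma visitCount_eq_ncard (k : ℕ) (x : 𝒮.X) :
    𝒮.visitCount D k x = ({n | 𝒮.iter n x ∈ D} ∩ Set.Icc 1 (k : ℤ)).ncard := by
  classical
  have hvisits : {n | 𝒮.iter n x ∈ D} ∩ Set.Icc 1 (k : ℤ) =
      ↑((Finset.Icc 1 (k : ℤ)).filter fun n => 𝒮.iter n x ∈ D) := by
    ext n; simp [and_comm]
  rw [visitCount, hvisits, Set.ncard_coe_finset]
  simp [Set.indicator_apply, Finset.sum_boole]

/-- Reverse Fatou, with the domination `visitCount D k ≤ k`. -/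
lemma measure_le_lintegral_limsup_visitCount_div (hD : MeasurableSet D) :
    𝒮.μ D ≤ ∫⁻ x, limsup (fun k : ℕ => 𝒮.visitCount D k x / k) atTop ∂𝒮.μ := by
  have := 𝒮.prob
  have hmean : ∀ᶠ k : ℕ in atTop, ∫⁻ x, 𝒮.visitCount D k x / k ∂𝒮.μ = 𝒮.μ D := by
    filter_upwards [eventually_ge_atTop 1] with k hk
    simp_rw [div_eq_mul_inv]
    rw [lintegral_mul_const _ (measurable_visitCount hD k), lintegral_visitCount hD, mul_right_comm,
      ENNReal.mul_inv_cancel (by exact_mod_cast (Nat.one_le_iff_ne_zero.1 hk)) (by simp), one_mul]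
  calc 𝒮.μ D = limsup (fun k : ℕ => ∫⁻ x, 𝒮.visitCount D k x / k ∂𝒮.μ) atTop := by
        rw [limsup_congr hmean, limsup_const]
    _ ≤ _ := limsup_lintegral_le 1 (fun k => (measurable_visitCount hD k).div_const _)
        (fun k => ae_of_all _ fun x => ENNReal.div_le_of_le_mul (by simpa using visitCount_le k x))
        (by simp)

end MPSystem

lemma frequently_lt_of_lt_lintegral {α : Type*} [MeasurableSpace α] {μ : Measure α}
    [IsProbabilityMeasure μ] {f : α → ℝ≥0∞} {c : ℝ≥0∞} (h : c < ∫⁻ x, f x ∂μ) :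
    ∃ᵐ x ∂μ, c < f x := by
  by_contra hf
  simp only [Filter.not_frequently, not_lt] at hf
  exact (lintegral_mono_ae hf).trans_eq (by simp) |>.not_gt h

lemma ncard_inter_Icc_div_le_one (A : Set ℤ) (n : ℤ) (k : ℕ) :
    ((A ∩ Set.Icc (n + 1) (n + k)).ncard : ℝ) / k ≤ 1 := by
  refine div_le_one_of_le₀ ?_ k.cast_nonneg
  calc ((A ∩ Set.Icc (n + 1) (n + k)).ncard : ℝ)
      ≤ (Set.Icc (n + 1) (n + k)).ncard := by
        exact_mod_cast Set.ncard_le_ncard Set.inter_subset_right (Set.finite_Icc _ _)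
    _ = k := by rw [← Finset.coe_Icc, Set.ncard_coe_finset, Int.card_Icc]; norm_cast; omega

lemma le_upperBanachDensity_of_frequently {A : Set ℤ} {r : ℝ}
    (h : ∃ᶠ k : ℕ in atTop, r ≤ ((A ∩ Set.Icc 1 (k : ℤ)).ncard : ℝ) / k) :
    r ≤ upperBanachDensity A := by
  refine le_limsup_of_frequently_le (h.mono fun k hk => hk.trans ?_)
    (isBoundedUnder_of ⟨1, fun k => ciSup_le (ncard_inter_Icc_div_le_one A · k)⟩)
  simpa using le_ciSup ⟨1, Set.forall_mem_range.2 (ncard_inter_Icc_div_le_one A · k)⟩ (0 : ℤ)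

lemma lt_upperBanachDensity_of_lt_limsup {A : Set ℤ} {δ : ℝ}
    (h : ENNReal.ofReal δ <
      limsup (fun k : ℕ => ((A ∩ Set.Icc 1 (k : ℤ)).ncard : ℝ≥0∞) / k) atTop) :
    δ < upperBanachDensity A := by
  obtain ⟨r, -, hδr, hrlim⟩ := ENNReal.lt_iff_exists_real_btwn.1 h
  refine (ENNReal.ofReal_lt_ofReal_iff'.1 hδr).1.trans_le (le_upperBanachDensity_of_frequently ?_)
  refine ((frequently_lt_of_lt_limsup (h := hrlim)).and_eventually
    (eventually_ge_atTop 1)).mono fun k ⟨hk, hk1⟩ => ?_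
  have hk0 : (0 : ℝ) < k := by exact_mod_cast hk1
  rw [← ENNReal.ofReal_natCast, ← ENNReal.ofReal_natCast k, ← ENNReal.ofReal_div_of_pos hk0,
    ENNReal.ofReal_lt_ofReal_iff'] at hk
  exact hk.1.le

theorem deltaRecurrence_of_meets_difference_sets_general (δ : ℝ) (S : Set ℤ)
    (h : ∀ A : Set ℤ, δ < upperBanachDensity A →
      (S ∩ Set.image2 (fun a b => a - b) A A).Nonempty) :
    IsDeltaRecurrenceSet δ S := by
  intro 𝒮 D hD hδD
  by_contra! hS
  have hnull : ∀ᵐ x ∂𝒮.μ, ∀ s : S, ∀ a, 𝒮.iter a x ∉ D ∩ 𝒮.iter s '' D :=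
    ae_all_iff.2 fun s => 𝒮.ae_forall_iter_notMem (nonpos_iff_eq_zero.1 (hS s s.2))
  have := 𝒮.prob
  have hdense : ∃ᵐ x ∂𝒮.μ,
      ENNReal.ofReal δ < limsup (fun k : ℕ => 𝒮.visitCount D k x / k) atTop :=
    frequently_lt_of_lt_lintegral
      (hδD.trans_le (MPSystem.measure_le_lintegral_limsup_visitCount_div hD))
  obtain ⟨x, hx, hxS⟩ := (hdense.and_eventually hnull).exists
  simp only [MPSystem.visitCount_eq_ncard] at hx
  obtain ⟨s, hs, a, ha, b, hb, rfl⟩ := h _ (lt_upperBanachDensity_of_lt_limsup hx)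
  exact hxS ⟨_, hs⟩ a ⟨ha, 𝒮.iter b x, hb, by rw [← MPSystem.iter_add, sub_add_cancel]⟩

/-- **Lemma.** Let `δ > 0` and `S ⊆ ℤ`. If `S ∩ (A − A) ≠ ∅` for every `A ⊆ ℤ` with
`d*(A) > δ`, then `S` is a set of `δ`-recurrence. -/
theorem deltaRecurrence_of_meets_difference_sets (δ : ℝ) (hδ : 0 < δ) (S : Set ℤ)
    (h : ∀ A : Set ℤ, δ < upperBanachDensity A →
      (S ∩ Set.image2 (fun a b => a - b) A A).Nonempty) :
    IsDeltaRecurrenceSet δ S :=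
  deltaRecurrence_of_meets_difference_sets_general δ S h
end
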